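/- If f : A^n → B is 2-set-transitive (i.e., its invariance group acts transitively on 2-element subsets of {1,...,n}), then f has a unique identification minor: for all two-element subsets I, J of {1,...,n}, the minors f_I and f_J are equivalent, i.e., there exists a permutation π of {1,...,n-1} with f_I(a) = f_J(aπ) for all a ∈ A^{n-1}. -/

import Mathlib

/-- `ofo l` lists the distinct elements of `l` in order of first occurrence. -/
def ofo {A : Type*} [DecidableEq A] (l : List A) : List A :=
  l.reverse.dedup.reverse

/-- The order-of-first-occurrence list of a tuple. -/
def ofoFun {A : Type*} [DecidableEq A] {n : ℕ} (a : Fin n → A) : List A :=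
  ofo (List.ofFn a)

/-- `delta i j hij : [n+1] → [n]` is the map δ_I for I = {i,j}, i < j (0-indexed). -/
def delta {n : ℕ} (i j : Fin (n + 1)) (hij : i < j) : Fin (n + 1) → Fin n := fun t =>
  if h : (t : ℕ) < (j : ℕ) then
    ⟨t, lt_of_lt_of_le h (Nat.lt_succ_iff.mp j.isLt)⟩
  else if h2 : (t : ℕ) = (j : ℕ) then
    ⟨i, lt_of_lt_of_le (Fin.lt_def.mp hij) (Nat.lt_succ_iff.mp j.isLt)⟩
  else ⟨(t : ℕ) - 1, by have := t.isLt; omega⟩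

/-!
An invariance permutation `σ` with `σ '' {i, j} = {k, l}` turns `f ∘ δ_I` into
`f ∘ (δ_I ∘ σ⁻¹)`, and `δ_I ∘ σ⁻¹ : [n+1] → [n]` identifies exactly the two points `k` and `l`,
just like `δ_J`. Two surjections onto `[n]` with the same fibres differ by a permutation of `[n]`.
-/

lemma delta_surjective {n : ℕ} (i j : Fin (n + 1)) (hij : i < j) :
    Function.Surjective (delta i j hij) := by
  intro m
  by_cases hm : (m : ℕ) < j
  · exact ⟨⟨m, by omega⟩, by simp [delta, hm]⟩
  · refine ⟨⟨m + 1, by omega⟩, ?_⟩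
    have : ¬ (m : ℕ) + 1 < j := by omega
    have : (m : ℕ) + 1 ≠ j := by omega
    simp [delta, *]

lemma delta_eq_delta_iff {n : ℕ} (i j : Fin (n + 1)) (hij : i < j) (t t' : Fin (n + 1)) :
    delta i j hij t = delta i j hij t' ↔ t = t' ∨ ({t, t'} : Set (Fin (n + 1))) = {i, j} := by
  have hi := Fin.lt_def.mp hij
  rw [Set.pair_eq_pair_iff]
  unfold delta
  split_ifs <;> simp_all [Fin.ext_iff] <;> omega

lemma exists_perm_comp_eq_of_surjective {α β : Type*} [Finite β] {d g : α → β}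
    (hd : Function.Surjective d) (hfib : ∀ t t', g t = g t' ↔ d t = d t') :
    ∃ π : Equiv.Perm β, ⇑π ∘ d = g := by
  set s := Function.surjInv hd
  have hinj : Function.Injective (g ∘ s) := fun b b' h => by
    simpa [s, Function.surjInv_eq] using (hfib _ _).mp h
  refine ⟨Equiv.ofBijective _ (Finite.injective_iff_bijective.mp hinj), funext fun t => ?_⟩
  exact (hfib _ _).mpr (Function.surjInv_eq hd (d t))

/-- A 2-set-transitive function has a unique identification minor. -/
theorem two_set_transitive_unique_identification_minor {A B : Type*} {n : ℕ}
    (f : (Fin (n + 1) → A) → B)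
    (h2st : ∀ i j k l : Fin (n + 1), i ≠ j → k ≠ l →
      ∃ σ : Equiv.Perm (Fin (n + 1)),
        (∀ a : Fin (n + 1) → A, f (a ∘ σ) = f a) ∧
        ({σ i, σ j} : Set (Fin (n + 1))) = {k, l})
    (i j : Fin (n + 1)) (hij : i < j) (k l : Fin (n + 1)) (hkl : k < l) :
    ∃ π : Equiv.Perm (Fin n), ∀ a : Fin n → A,
      f (a ∘ delta i j hij) = f ((a ∘ π) ∘ delta k l hkl) := by
  obtain ⟨σ, hσ, hset⟩ := h2st i j k l hij.ne hkl.ne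
  have hfib : ∀ t t', delta i j hij (σ.symm t) = delta i j hij (σ.symm t') ↔
      delta k l hkl t = delta k l hkl t' := fun t t' => by
    rw [delta_eq_delta_iff, delta_eq_delta_iff, ← hset]
    simp only [Set.pair_eq_pair_iff, Equiv.symm_apply_eq, EmbeddingLike.apply_eq_iff_eq]
  obtain ⟨π, hπ⟩ := exists_perm_comp_eq_of_surjective (g := delta i j hij ∘ σ.symm)
    (delta_surjective k l hkl) hfib
  refine ⟨π, fun a => ?_⟩
  calc f (a ∘ delta i j hij)
      = f ((a ∘ delta i j hij ∘ σ.symm) ∘ σ) := by simp [Function.comp_def]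
    _ = f (a ∘ delta i j hij ∘ σ.symm) := hσ _
    _ = f ((a ∘ π) ∘ delta k l hkl) := by rw [← hπ]; rfl
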